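/- Let k, l ≥ 1, m = 2k, n = 2l+1, and 1 ≤ r ≤ mn. Call a board B with r blockers reduced if its counts λ_t = λ_t(B) and δ_t = δ_t(B) satisfy: (i) λ1 ≥ λ2, λ1 ≥ λ3, λ1 ≥ λ4; (ii) if λ1 = λ2 then λ3 ≥ λ4; (iii) if λ1 = λ3 then λ2 ≥ λ4, and if in addition λ2 = λ4 then δ1 ≥ δ2; (iv) if λ1 = λ4 then λ2 ≥ λ3, and if in addition λ2 = λ3 then δ1 ≥ δ2. Then: (a) every board with r blockers on the m×n grid is equivalent under {R0, H, V, R180} to some reduced board; and (b) if two reduced boards are equivalent under {R0, H, V, R180} then they have the same board partition (equal values of all λ_t and both δ_t). -/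
import Mathlib


/-- The symmetry group `{R0, H, V, R180}` of a non-square `m × n` rectangle,
as permutations of `Fin m × Fin n` (`Fin.rev i = m-1-i` resp. `n-1-j`). -/
def RectG (m n : ℕ) : Set ((Fin m × Fin n) → (Fin m × Fin n)) :=
  { fun p => p,                    -- R0
    fun p => (p.1.rev, p.2),       -- H
    fun p => (p.1, p.2.rev),       -- V
    fun p => (p.1.rev, p.2.rev) }  -- R180

/-- Blockers in the top-left corner `Q1`. -/
def lam1 (k l : ℕ) (B : Finset (Fin (2*k) × Fin (2*l+1))) : ℕ :=
  (B.filter (fun p => p.1.val < k ∧ p.2.val < l)).card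

/-- Blockers in the top-right corner `Q2`. -/
def lam2 (k l : ℕ) (B : Finset (Fin (2*k) × Fin (2*l+1))) : ℕ :=
  (B.filter (fun p => p.1.val < k ∧ l < p.2.val)).card

/-- Blockers in the bottom-right corner `Q3`. -/
def lam3 (k l : ℕ) (B : Finset (Fin (2*k) × Fin (2*l+1))) : ℕ :=
  (B.filter (fun p => k ≤ p.1.val ∧ l < p.2.val)).card

/-- Blockers in the bottom-left corner `Q4`. -/
def lam4 (k l : ℕ) (B : Finset (Fin (2*k) × Fin (2*l+1))) : ℕ :=
  (B.filter (fun p => k ≤ p.1.val ∧ p.2.val < l)).card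

/-- Blockers in the top middle-column strip `S1`. -/
def del1 (k l : ℕ) (B : Finset (Fin (2*k) × Fin (2*l+1))) : ℕ :=
  (B.filter (fun p => p.1.val < k ∧ p.2.val = l)).card

/-- Blockers in the bottom middle-column strip `S2`. -/
def del2 (k l : ℕ) (B : Finset (Fin (2*k) × Fin (2*l+1))) : ℕ :=
  (B.filter (fun p => k ≤ p.1.val ∧ p.2.val = l)).card

/-- Conditions (i)–(iv) on the board partition `(λ1,λ2,λ3,λ4; δ1,δ2)` of a
`2k × (2l+1)` board. -/
def ReducedEO (k l : ℕ) (B : Finset (Fin (2*k) × Fin (2*l+1))) : Prop :=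
  -- (i)
  lam1 k l B ≥ lam2 k l B ∧ lam1 k l B ≥ lam3 k l B ∧ lam1 k l B ≥ lam4 k l B ∧
  -- (ii)
  (lam1 k l B = lam2 k l B → lam3 k l B ≥ lam4 k l B) ∧
  -- (iii)
  (lam1 k l B = lam3 k l B →
    lam2 k l B ≥ lam4 k l B ∧
    (lam2 k l B = lam4 k l B → del1 k l B ≥ del2 k l B)) ∧
  -- (iv)
  (lam1 k l B = lam4 k l B →
    lam2 k l B ≥ lam3 k l B ∧
    (lam2 k l B = lam3 k l B → del1 k l B ≥ del2 k l B))

/-- Arithmetic form of the reducedness conditions on a tuple. -/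
def Red (a b c d e f : ℕ) : Prop :=
  a ≥ b ∧ a ≥ c ∧ a ≥ d ∧ (a = b → c ≥ d) ∧
  (a = c → b ≥ d ∧ (b = d → e ≥ f)) ∧
  (a = d → b ≥ c ∧ (b = c → e ≥ f))

lemma reducedEO_iff (k l : ℕ) (B : Finset (Fin (2*k) × Fin (2*l+1))) :
    ReducedEO k l B ↔ Red (lam1 k l B) (lam2 k l B) (lam3 k l B) (lam4 k l B)
      (del1 k l B) (del2 k l B) := Iff.rfl

lemma redA (a b c d e f : ℕ) :
    Red a b c d e f ∨ Red d c b a f e ∨ Red b a d c e f ∨ Red c d a b f e := by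
  unfold Red; omega

lemma redH (a b c d e f : ℕ) (h1 : Red a b c d e f) (h2 : Red d c b a f e) :
    a = d ∧ b = c ∧ c = b ∧ d = a ∧ e = f ∧ f = e := by unfold Red at *; omega

lemma redV (a b c d e f : ℕ) (h1 : Red a b c d e f) (h2 : Red b a d c e f) :
    a = b ∧ b = a ∧ c = d ∧ d = c ∧ e = e ∧ f = f := by unfold Red at *; omega

lemma redR (a b c d e f : ℕ) (h1 : Red a b c d e f) (h2 : Red c d a b f e) :
    a = c ∧ b = d ∧ c = a ∧ d = b ∧ e = f ∧ f = e := by unfold Red at *; omega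

lemma card_filter_image {α β : Type*} [DecidableEq β] (B : Finset α) (g : α → β)
    (hg : Function.Injective g) (P : β → Prop) [DecidablePred P] :
    ((B.image g).filter P).card = (B.filter (fun x => P (g x))).card := by
  rw [Finset.filter_image, Finset.card_image_of_injective _ hg]

section maps
variable {k l : ℕ}

lemma injH : Function.Injective
    (fun p : Fin (2*k) × Fin (2*l+1) => ((p.1.rev, p.2) : Fin (2*k) × Fin (2*l+1))) := by
  intro p q h
  simp only [Prod.mk.injEq, Fin.rev_inj] at h
  exact Prod.ext h.1 h.2

lemma injV : Function.Injective
    (fun p : Fin (2*k) × Fin (2*l+1) => ((p.1, p.2.rev) : Fin (2*k) × Fin (2*l+1))) := by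
  intro p q h
  simp only [Prod.mk.injEq, Fin.rev_inj] at h
  exact Prod.ext h.1 h.2

lemma injR : Function.Injective
    (fun p : Fin (2*k) × Fin (2*l+1) => ((p.1.rev, p.2.rev) : Fin (2*k) × Fin (2*l+1))) := by
  intro p q h
  simp only [Prod.mk.injEq, Fin.rev_inj] at h
  exact Prod.ext h.1 h.2

lemma image_H (B : Finset (Fin (2*k) × Fin (2*l+1))) :
    lam1 k l (B.image (fun p => (p.1.rev, p.2))) = lam4 k l B ∧
    lam2 k l (B.image (fun p => (p.1.rev, p.2))) = lam3 k l B ∧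
    lam3 k l (B.image (fun p => (p.1.rev, p.2))) = lam2 k l B ∧
    lam4 k l (B.image (fun p => (p.1.rev, p.2))) = lam1 k l B ∧
    del1 k l (B.image (fun p => (p.1.rev, p.2))) = del2 k l B ∧
    del2 k l (B.image (fun p => (p.1.rev, p.2))) = del1 k l B := by
  refine ⟨?_, ?_, ?_, ?_, ?_, ?_⟩ <;>
  · simp only [lam1, lam2, lam3, lam4, del1, del2]
    rw [card_filter_image _ _ injH]
    refine congrArg Finset.card (Finset.filter_congr fun p _ => ?_)
    have h1 := p.1.isLt; have h2 := p.2.isLt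
    simp only [eq_iff_iff, Fin.val_rev]
    omega

lemma image_V (B : Finset (Fin (2*k) × Fin (2*l+1))) :
    lam1 k l (B.image (fun p => (p.1, p.2.rev))) = lam2 k l B ∧
    lam2 k l (B.image (fun p => (p.1, p.2.rev))) = lam1 k l B ∧
    lam3 k l (B.image (fun p => (p.1, p.2.rev))) = lam4 k l B ∧
    lam4 k l (B.image (fun p => (p.1, p.2.rev))) = lam3 k l B ∧
    del1 k l (B.image (fun p => (p.1, p.2.rev))) = del1 k l B ∧
    del2 k l (B.image (fun p => (p.1, p.2.rev))) = del2 k l B := by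
  refine ⟨?_, ?_, ?_, ?_, ?_, ?_⟩ <;>
  · simp only [lam1, lam2, lam3, lam4, del1, del2]
    rw [card_filter_image _ _ injV]
    refine congrArg Finset.card (Finset.filter_congr fun p _ => ?_)
    have h1 := p.1.isLt; have h2 := p.2.isLt
    simp only [eq_iff_iff, Fin.val_rev]
    omega

lemma image_R (B : Finset (Fin (2*k) × Fin (2*l+1))) :
    lam1 k l (B.image (fun p => (p.1.rev, p.2.rev))) = lam3 k l B ∧
    lam2 k l (B.image (fun p => (p.1.rev, p.2.rev))) = lam4 k l B ∧
    lam3 k l (B.image (fun p => (p.1.rev, p.2.rev))) = lam1 k l B ∧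
    lam4 k l (B.image (fun p => (p.1.rev, p.2.rev))) = lam2 k l B ∧
    del1 k l (B.image (fun p => (p.1.rev, p.2.rev))) = del2 k l B ∧
    del2 k l (B.image (fun p => (p.1.rev, p.2.rev))) = del1 k l B := by
  refine ⟨?_, ?_, ?_, ?_, ?_, ?_⟩ <;>
  · simp only [lam1, lam2, lam3, lam4, del1, del2]
    rw [card_filter_image _ _ injR]
    refine congrArg Finset.card (Finset.filter_congr fun p _ => ?_)
    have h1 := p.1.isLt; have h2 := p.2.isLt
    simp only [eq_iff_iff, Fin.val_rev]
    omega

end maps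

/-- (a) every board with `r` blockers on the `2k × (2l+1)` grid is
equivalent under `{R0, H, V, R180}` to a reduced board; (b) two equivalent
reduced boards have the same board partition. -/
theorem stmt_8 (k l r : ℕ) (hk : 1 ≤ k) (hl : 1 ≤ l)
    (hr1 : 1 ≤ r) (hr2 : r ≤ 2*k * (2*l+1)) :
    (∀ B : Finset (Fin (2*k) × Fin (2*l+1)), B.card = r →
      ∃ B' : Finset (Fin (2*k) × Fin (2*l+1)), B'.card = r ∧ ReducedEO k l B' ∧
        ∃ g ∈ RectG (2*k) (2*l+1), B.image g = B') ∧
    (∀ B B' : Finset (Fin (2*k) × Fin (2*l+1)), B.card = r → B'.card = r →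
      ReducedEO k l B → ReducedEO k l B' →
      (∃ g ∈ RectG (2*k) (2*l+1), B.image g = B') →
      lam1 k l B = lam1 k l B' ∧ lam2 k l B = lam2 k l B' ∧
      lam3 k l B = lam3 k l B' ∧ lam4 k l B = lam4 k l B' ∧
      del1 k l B = del1 k l B' ∧ del2 k l B = del2 k l B') := by
  constructor
  · -- part (a)
    intro B hB
    rcases redA (lam1 k l B) (lam2 k l B) (lam3 k l B) (lam4 k l B)
      (del1 k l B) (del2 k l B) with h | h | h | h
    · exact ⟨B, hB, (reducedEO_iff k l B).mpr h,
        fun p => p, by simp [RectG], by simp⟩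
    · refine ⟨B.image (fun p => (p.1.rev, p.2)),
        by rw [Finset.card_image_of_injective _ injH, hB], ?_,
        fun p => (p.1.rev, p.2), by simp [RectG], rfl⟩
      obtain ⟨e1, e2, e3, e4, e5, e6⟩ := image_H (k := k) (l := l) B
      rw [reducedEO_iff, e1, e2, e3, e4, e5, e6]
      exact h
    · refine ⟨B.image (fun p => (p.1, p.2.rev)),
        by rw [Finset.card_image_of_injective _ injV, hB], ?_,
        fun p => (p.1, p.2.rev), by simp [RectG], rfl⟩
      obtain ⟨e1, e2, e3, e4, e5, e6⟩ := image_V (k := k) (l := l) B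
      rw [reducedEO_iff, e1, e2, e3, e4, e5, e6]
      exact h
    · refine ⟨B.image (fun p => (p.1.rev, p.2.rev)),
        by rw [Finset.card_image_of_injective _ injR, hB], ?_,
        fun p => (p.1.rev, p.2.rev), by simp [RectG], rfl⟩
      obtain ⟨e1, e2, e3, e4, e5, e6⟩ := image_R (k := k) (l := l) B
      rw [reducedEO_iff, e1, e2, e3, e4, e5, e6]
      exact h
  · -- part (b)
    intro B B' hB hB' hRB hRB' ⟨g, hg, hgB⟩
    subst hgB
    rw [reducedEO_iff] at hRB hRB'
    simp only [RectG, Set.mem_insert_iff, Set.mem_singleton_iff] at hg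
    rcases hg with rfl | rfl | rfl | rfl
    · simp [Finset.image_id']
    · obtain ⟨e1, e2, e3, e4, e5, e6⟩ := image_H (k := k) (l := l) B
      rw [e1, e2, e3, e4, e5, e6] at hRB' ⊢
      exact redH _ _ _ _ _ _ hRB hRB'
    · obtain ⟨e1, e2, e3, e4, e5, e6⟩ := image_V (k := k) (l := l) B
      rw [e1, e2, e3, e4, e5, e6] at hRB' ⊢
      exact redV _ _ _ _ _ _ hRB hRB'
    · obtain ⟨e1, e2, e3, e4, e5, e6⟩ := image_R (k := k) (l := l) B
      rw [e1, e2, e3, e4, e5, e6] at hRB' ⊢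
      exact redR _ _ _ _ _ _ hRB hRB'
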